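/- Let k ≥ 1 and N ≥ 1 be integers and (a_n) a sequence of complex numbers. Then Σ_{χ mod k} |Σ_{n ≤ N} a_n χ(n)|² ≤ φ(k)·(N/k + 1)·Σ_{n ≤ N} |a_n|², where the outer sum runs over all Dirichlet characters modulo k. -/

import Mathlib

/-!
Grouping `n` by its residue `r` mod `k` turns the inner sum into `∑ r, F r * χ r` with
`F r = ∑_{n ≡ r} a n`. Orthogonality of the characters gives the Parseval identity
`∑ χ |∑ r, F r χ r|² = φ(k) ∑_{r unit} |F r|²`, and Cauchy–Schwarz on each residue class,
which has at most `N / k + 1` elements in `[1, N]`, bounds `|F r|²`.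
-/

open Finset

theorem Finset.norm_sum_sq_le_card_mul_sum_norm_sq {ι E : Type*} [SeminormedAddCommGroup E]
    (s : Finset ι) (f : ι → E) : ‖∑ i ∈ s, f i‖ ^ 2 ≤ #s * ∑ i ∈ s, ‖f i‖ ^ 2 :=
  (pow_le_pow_left₀ (norm_nonneg _) (norm_sum_le s f) 2).trans sq_sum_le_card_mul_sum_sq

theorem Finset.sum_mul_comp_eq_sum_fiberwise {ι κ R : Type*} [Fintype κ] [DecidableEq κ]
    [NonUnitalNonAssocSemiring R] (s : Finset ι) (g : ι → κ) (a : ι → R) (f : κ → R) :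
    ∑ i ∈ s, a i * f (g i) = ∑ j, (∑ i ∈ s with g i = j, a i) * f j := by
  rw [← sum_fiberwise s g]
  simp_rw [sum_mul]
  exact sum_congr rfl fun j _ => sum_congr rfl fun i hi => by rw [(mem_filter.1 hi).2]

/-- `n ↦ n / k` is injective on a residue class mod `k`. -/
theorem card_filter_natCast_eq_le_div_add_one {s : Finset ℕ} {N : ℕ} (hs : ∀ n ∈ s, n ≤ N)
    (k : ℕ) (r : ZMod k) : #{n ∈ s | ((n : ℕ) : ZMod k) = r} ≤ N / k + 1 := by
  calc #{n ∈ s | ((n : ℕ) : ZMod k) = r} ≤ #(range (N / k + 1)) := by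
        refine card_le_card_of_injOn (· / k) (fun n hn => ?_) fun m hm n hn hmn => ?_
        · simp only [coe_filter, Set.mem_ofPred_eq, coe_range, Set.mem_Iio] at hn ⊢
          exact Nat.lt_succ_of_le (Nat.div_le_div_right (hs n hn.1))
        · simp only [coe_filter, Set.mem_ofPred_eq] at hm hn
          have hmod : m % k = n % k :=
            (ZMod.natCast_eq_natCast_iff' m n k).1 (hm.2.trans hn.2.symm)
          rw [← Nat.div_add_mod m k, ← Nat.div_add_mod n k, hmod, show m / k = n / k from hmn]
    _ = N / k + 1 := card_range _

namespace DirichletCharacter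

variable {k : ℕ} [NeZero k]

theorem sum_apply_mul_star_apply (r t : ZMod k) :
    ∑ χ : DirichletCharacter ℂ k, χ r * star (χ t) =
      if IsUnit t ∧ t = r then (k.totient : ℂ) else 0 := by
  by_cases ht : IsUnit t
  · obtain ⟨u, rfl⟩ := ht
    have star_apply_unit (χ : DirichletCharacter ℂ k) : star (χ u) = χ (u : ZMod k)⁻¹ := by
      rw [MulChar.star_apply', MulChar.inv_apply, Ring.inverse_unit, ZMod.inv_coe_unit]
    calc _ = ∑ χ : DirichletCharacter ℂ k, χ (u : ZMod k)⁻¹ * χ r :=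
          sum_congr rfl fun χ _ => by rw [star_apply_unit, mul_comm]
      _ = _ := (sum_char_inv_mul_char_eq ℂ u.isUnit r).trans (by simp)
  · simp [MulChar.map_nonunit _ ht, ht]

theorem sum_norm_sq_sum_mul_apply (F : ZMod k → ℂ) :
    ∑ χ : DirichletCharacter ℂ k, ‖∑ r, F r * χ r‖ ^ 2 =
      k.totient * ∑ r with IsUnit r, ‖F r‖ ^ 2 := by
  apply Complex.ofReal_injective
  push_cast
  calc ∑ χ : DirichletCharacter ℂ k, (‖∑ r, F r * χ r‖ : ℂ) ^ 2
      = ∑ r, ∑ t, F r * star (F t) * ∑ χ : DirichletCharacter ℂ k, χ r * star (χ t) := by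
        simp_rw [← Complex.mul_conj', map_sum, sum_mul_sum, mul_sum]
        rw [sum_comm]
        refine sum_congr rfl fun r _ => ?_
        rw [sum_comm]
        refine sum_congr rfl fun t _ => sum_congr rfl fun χ _ => ?_
        simp only [map_mul, RCLike.star_def]
        ring
    _ = k.totient * ∑ r with IsUnit r, (‖F r‖ : ℂ) ^ 2 := by
        simp_rw [sum_apply_mul_star_apply, mul_ite, mul_zero, sum_filter, mul_sum]
        refine sum_congr rfl fun r _ => ?_
        rw [sum_eq_single r (fun t _ ht => if_neg fun h => ht h.2) (by simp)]
        simp only [and_true, RCLike.star_def, Complex.mul_conj']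
        split_ifs <;> ring

end DirichletCharacter

theorem mean_value_char_sum_general (k N : ℕ) (hk : 1 ≤ k) (a : ℕ → ℂ) :
    ∑ χ : DirichletCharacter ℂ k, ‖∑ n ∈ Finset.Icc 1 N, a n * χ (n : ZMod k)‖ ^ 2 ≤
      (Nat.totient k : ℝ) * ((N : ℝ) / k + 1) * ∑ n ∈ Finset.Icc 1 N, ‖a n‖ ^ 2 := by
  have : NeZero k := ⟨by omega⟩
  set fiber : ZMod k → Finset ℕ := fun r => {n ∈ Icc 1 N | ((n : ℕ) : ZMod k) = r}
  have card_fiber_le (r : ZMod k) : (#(fiber r) : ℝ) ≤ N / k + 1 := by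
    have hcard := card_filter_natCast_eq_le_div_add_one (s := Icc 1 N)
      (fun n hn => (mem_Icc.1 hn).2) k r
    calc (#(fiber r) : ℝ) ≤ (N / k : ℕ) + 1 := by exact_mod_cast hcard
      _ ≤ N / k + 1 := by gcongr; exact Nat.cast_div_le
  calc ∑ χ : DirichletCharacter ℂ k, ‖∑ n ∈ Icc 1 N, a n * χ (n : ZMod k)‖ ^ 2
      = ∑ χ : DirichletCharacter ℂ k, ‖∑ r, (∑ n ∈ fiber r, a n) * χ r‖ ^ 2 := by
        refine sum_congr rfl fun χ _ => ?_
        rw [sum_mul_comp_eq_sum_fiberwise (Icc 1 N) (fun n : ℕ => (n : ZMod k))]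
    _ = k.totient * ∑ r with IsUnit r, ‖∑ n ∈ fiber r, a n‖ ^ 2 :=
        DirichletCharacter.sum_norm_sq_sum_mul_apply _
    _ ≤ k.totient * ∑ r, ‖∑ n ∈ fiber r, a n‖ ^ 2 := by
        gcongr
        exact filter_subset _ _
    _ ≤ k.totient * ∑ r, ((N : ℝ) / k + 1) * ∑ n ∈ fiber r, ‖a n‖ ^ 2 := by
        gcongr with r
        exact (norm_sum_sq_le_card_mul_sum_norm_sq _ _).trans (by gcongr; exact card_fiber_le r)
    _ = k.totient * ((N : ℝ) / k + 1) * ∑ n ∈ Icc 1 N, ‖a n‖ ^ 2 := by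
        rw [← mul_sum, sum_fiberwise, mul_assoc]

/-- Mean value estimate for Dirichlet character sums:
`∑_{χ mod k} |∑_{n ≤ N} a_n χ(n)|² ≤ φ(k)(N/k + 1) ∑_{n ≤ N} |a_n|²`. -/
theorem mean_value_char_sum (k N : ℕ) (hk : 1 ≤ k) (hN : 1 ≤ N) (a : ℕ → ℂ) :
    ∑ χ : DirichletCharacter ℂ k, ‖∑ n ∈ Finset.Icc 1 N, a n * χ (n : ZMod k)‖ ^ 2 ≤
      (Nat.totient k : ℝ) * ((N : ℝ) / k + 1) * ∑ n ∈ Finset.Icc 1 N, ‖a n‖ ^ 2 :=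
  mean_value_char_sum_general k N hk a
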